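/- arXiv:2008.07047 — 3 statements merged into one kernel-verified Lean document; each statement's English description precedes it below -/
import Mathlib

section
/- Let p be a prime and n ≥ 1. Suppose (M,D) and (M̃,D̃) are conjugate in GL_n(p) (M, M̃ ∈ M_n(ℤ) expanding integer matrices, D, D̃ ⊂ ℤ^n finite digit sets). If Z_{D̃}^n ⊆ E̊_p^n or Z_D^n ⊆ E̊_p^n, then (M,D) is admissible if and only if (M̃,D̃) is admissible. -/
open MeasureTheory Matrix Set Complex
open scoped Real Pointwise ENNReal

noncomputable section

namespace SA

variable {n : ℕ}

/-- Cast an integer matrix to a real matrix. -/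
def toR (M : Matrix (Fin n) (Fin n) ℤ) : Matrix (Fin n) (Fin n) ℝ :=
  M.map (Int.cast : ℤ → ℝ)

/-- Cast an integer vector to a real vector. -/
def vecR (d : Fin n → ℤ) : Fin n → ℝ := fun i => (d i : ℝ)

/-- A real matrix is expanding if all of its complex eigenvalues have modulus > 1. -/
def IsExpandingR (M : Matrix (Fin n) (Fin n) ℝ) : Prop :=
  ∀ z : ℂ, (M.map (Complex.ofReal)).charpoly.IsRoot z → 1 < ‖z‖

/-- An integer matrix is expanding if all of its complex eigenvalues have modulus > 1. -/
def IsExpanding (M : Matrix (Fin n) (Fin n) ℤ) : Prop :=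
  IsExpandingR (toR M)

/-- Standard inner product on `ℝ^n`. -/
def dotR (x y : Fin n → ℝ) : ℝ := ∑ i, x i * y i

/-- The exponential function `e_λ(x) = e^{2πi⟨λ,x⟩}`. -/
def expFun (lam : Fin n → ℝ) : (Fin n → ℝ) → ℂ :=
  fun x => Complex.exp (2 * Real.pi * Complex.I * (dotR lam x))

/-- Mask polynomial of a finite real digit set. -/
def maskR (D : Finset (Fin n → ℝ)) (x : Fin n → ℝ) : ℂ :=
  (D.card : ℂ)⁻¹ * ∑ d ∈ D, Complex.exp (2 * Real.pi * Complex.I * (dotR d x))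

/-- Zero set of the mask polynomial of a real digit set. -/
def maskZR (D : Finset (Fin n → ℝ)) : Set (Fin n → ℝ) := {x | maskR D x = 0}

/-- Mask polynomial of a finite integer digit set. -/
def mask (D : Finset (Fin n → ℤ)) (x : Fin n → ℝ) : ℂ :=
  (D.card : ℂ)⁻¹ * ∑ d ∈ D, Complex.exp (2 * Real.pi * Complex.I * (dotR (vecR d) x))

/-- Zero set `Z(m_D)` of the mask polynomial of an integer digit set. -/
def maskZ (D : Finset (Fin n → ℤ)) : Set (Fin n → ℝ) := {x | mask D x = 0}

/-- `Z_D^n := Z(m_D) ∩ [0,1)^n`. -/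
def ZDn (D : Finset (Fin n → ℤ)) : Set (Fin n → ℝ) :=
  maskZ D ∩ {x | ∀ i, 0 ≤ x i ∧ x i < 1}

/-- `E̊_p^n := (1/p){(l₁,…,l_n) : 0 ≤ lᵢ ≤ p-1} \ {0}`. -/
def Ering (p n : ℕ) : Set (Fin n → ℝ) :=
  {x | (∃ l : Fin n → ℕ, (∀ i, l i ≤ p - 1) ∧ ∀ i, x i = (l i : ℝ) / p) ∧ x ≠ 0}

/-- The integer lattice `ℤ^n` inside `ℝ^n`. -/
def latticeZ (n : ℕ) : Set (Fin n → ℝ) := {x | ∀ i, ∃ k : ℤ, x i = (k : ℝ)}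

/-- `μ` is the self-affine measure generated by the real expanding matrix `M`
and the real digit set `D`: it is a Borel probability measure satisfying
`μ = (1/|D|) ∑_{d∈D} μ ∘ φ_d⁻¹` with `φ_d(x) = M⁻¹(x+d)`. -/
def IsSelfAffineR (M : Matrix (Fin n) (Fin n) ℝ) (D : Finset (Fin n → ℝ))
    (μ : Measure (Fin n → ℝ)) : Prop :=
  IsProbabilityMeasure μ ∧
    μ = (D.card : ℝ≥0∞)⁻¹ • ∑ d ∈ D, μ.map (fun x => M⁻¹.mulVec (x + d))

/-- `μ` is the self-affine measure generated by the integer expanding matrix `M`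
and the integer digit set `D`. -/
def IsSelfAffine (M : Matrix (Fin n) (Fin n) ℤ) (D : Finset (Fin n → ℤ))
    (μ : Measure (Fin n → ℝ)) : Prop :=
  IsProbabilityMeasure μ ∧
    μ = (D.card : ℝ≥0∞)⁻¹ • ∑ d ∈ D, μ.map (fun x => (toR M)⁻¹.mulVec (x + vecR d))

/-- Fourier transform `μ̂(ξ) = ∫ e^{2πi⟨x,ξ⟩} dμ(x)`. -/
def FT (μ : Measure (Fin n → ℝ)) (ξ : Fin n → ℝ) : ℂ :=
  ∫ x, Complex.exp (2 * Real.pi * Complex.I * (dotR x ξ)) ∂μ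

/-- The family of exponentials `E(Λ)` is mutually orthogonal in `L²(μ)`:
`μ̂(λ - λ') = 0` for all distinct `λ, λ' ∈ Λ`. -/
def OrthExp (μ : Measure (Fin n → ℝ)) (Λ : Set (Fin n → ℝ)) : Prop :=
  ∀ a ∈ Λ, ∀ b ∈ Λ, a ≠ b → FT μ (a - b) = 0

/-- `Λ` is a spectrum of `μ`: the exponentials `{e^{2πi⟨λ,x⟩} : λ ∈ Λ}` form an
orthonormal (Hilbert) basis of `L²(μ)`. -/
def IsSpectrum (μ : Measure (Fin n → ℝ)) (Λ : Set (Fin n → ℝ)) : Prop :=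
  ∃ b : HilbertBasis Λ ℂ (Lp ℂ 2 μ), ∀ l : Λ, (b l : Lp ℂ 2 μ) =ᵐ[μ] expFun (l : Fin n → ℝ)

/-- `μ` is a spectral measure. -/
def IsSpectralMeasure (μ : Measure (Fin n → ℝ)) : Prop :=
  ∃ Λ : Set (Fin n → ℝ), Λ.Countable ∧ IsSpectrum μ Λ

/-- `(M, D)` is admissible: there is `S ⊂ ℤ^n` with `|S| = |D|` such that
`H = (1/√|S|)[e^{2πi⟨M⁻¹d,s⟩}]_{d∈D,s∈S}` satisfies `H^*H = I`. -/
def Admissible (M : Matrix (Fin n) (Fin n) ℤ) (D : Finset (Fin n → ℤ)) : Prop :=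
  ∃ S : Finset (Fin n → ℤ), S.card = D.card ∧
    letI H : Matrix {d // d ∈ D} {s // s ∈ S} ℂ := fun d s =>
      ((1 : ℂ) / (Real.sqrt S.card : ℂ)) *
        Complex.exp (2 * Real.pi * Complex.I *
          (dotR ((toR M)⁻¹.mulVec (vecR (d : Fin n → ℤ))) (vecR (s : Fin n → ℤ))))
    Hᴴ * H = 1

/-- Two matrices are congruent entrywise modulo `p`. -/
def ModEq (p : ℕ) (A B : Matrix (Fin n) (Fin n) ℤ) : Prop :=
  ∀ i j, (p : ℤ) ∣ (A i j - B i j)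

/-- `(M, D)` and `(M̃, D̃)` are conjugate in `GL_n(p)`: there are integer matrices
`A, B` with determinants prime to `p`, `AB ≡ I (mod p)`, `M̃ = AMB`, and either
`D = B D̃` or `D̃ = A D`. -/
def ConjugateGL (p : ℕ) (M Mt : Matrix (Fin n) (Fin n) ℤ)
    (D Dt : Finset (Fin n → ℤ)) : Prop :=
  ∃ A B : Matrix (Fin n) (Fin n) ℤ,
    ¬ (p : ℤ) ∣ A.det ∧ ¬ (p : ℤ) ∣ B.det ∧ ModEq p (A * B) 1 ∧ Mt = A * M * B ∧
      ((∀ d, d ∈ D ↔ ∃ dt ∈ Dt, d = B.mulVec dt) ∨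
       (∀ dt, dt ∈ Dt ↔ ∃ d ∈ D, dt = A.mulVec d))

/-!
Admissibility of `(M, D)` amounts to a set `Λ ⊂ M⁻ᵀ ℤⁿ` of `|D|` points whose pairwise
differences are zeros of `m_D`. Translating one point of `Λ` to `0`, the hypothesis on the
zero sets puts the relevant points in `(1/p) ℤⁿ`, where an integer matrix acts modulo `ℤⁿ`
only through its reduction mod `p`. There `AᵀBᵀ ≡ BᵀAᵀ ≡ I`, so together with
`m_{CE}(x) = m_E(Cᵀ x)` the map `Bᵀ` carries such a set for `(M, D)` to one for `(AMB, D̃)`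
and `Aᵀ` carries one back. Integrality of the new points follows because `det B` is prime
to `p`: if `p y` and `Bᵀ y` are integral, so is `y`.
-/

lemma toR_eq_mapMatrix (C : Matrix (Fin n) (Fin n) ℤ) : toR C = (Int.castRingHom ℝ).mapMatrix C :=
  rfl

lemma toR_mul (C C' : Matrix (Fin n) (Fin n) ℤ) : toR (C * C') = toR C * toR C' := by
  simp only [toR_eq_mapMatrix, map_mul]

lemma toR_mul_transpose_mulVec (C C' : Matrix (Fin n) (Fin n) ℤ) (x : Fin n → ℝ) :
    (toR (C * C'))ᵀ *ᵥ x = (toR C')ᵀ *ᵥ ((toR C)ᵀ *ᵥ x) := by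
  rw [toR_mul, transpose_mul, mulVec_mulVec]

lemma toR_mulVec_vecR (C : Matrix (Fin n) (Fin n) ℤ) (z : Fin n → ℤ) :
    toR C *ᵥ vecR z = vecR (C *ᵥ z) := by
  funext i
  exact ((Int.castRingHom ℝ).map_mulVec C z i).symm

lemma det_toR (C : Matrix (Fin n) (Fin n) ℤ) : (toR C).det = C.det :=
  ((Int.castRingHom ℝ).map_det C).symm

lemma isUnit_det_transpose_toR {M : Matrix (Fin n) (Fin n) ℤ} (hM : M.det ≠ 0) :
    IsUnit ((toR M)ᵀ).det := by
  rw [det_transpose, det_toR, isUnit_iff_ne_zero]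
  exact_mod_cast hM

lemma vecR_injective : Function.Injective (vecR (n := n)) :=
  fun _ _ h => funext fun i => Int.cast_injective (congrFun h i)

lemma dotR_vecR_vecR (d z : Fin n → ℤ) : dotR (vecR d) (vecR z) = ((d ⬝ᵥ z : ℤ) : ℝ) := by
  simp [dotR, vecR, dotProduct]

lemma IsExpanding.det_ne_zero {M : Matrix (Fin n) (Fin n) ℤ} (h : IsExpanding M) : M.det ≠ 0 := by
  intro h0
  have hmap : (toR M).map Complex.ofReal = (Int.castRingHom ℂ).mapMatrix M := by
    ext i j; simp [toR]
  have hroot : ((toR M).map Complex.ofReal).charpoly.IsRoot 0 := by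
    rw [Polynomial.IsRoot, eval_charpoly, map_zero, zero_sub, det_neg, hmap,
      ← RingHom.map_det, h0, map_zero, mul_zero]
  exact absurd (h 0 hroot) (by simp)

lemma mem_latticeZ_iff {x : Fin n → ℝ} : x ∈ latticeZ n ↔ ∃ z, vecR z = x := by
  refine ⟨fun h => ?_, by rintro ⟨z, rfl⟩ i; exact ⟨z i, rfl⟩⟩
  choose z hz using h
  exact ⟨z, funext fun i => (hz i).symm⟩

lemma zero_mem_latticeZ : (0 : Fin n → ℝ) ∈ latticeZ n := fun _ => ⟨0, by simp⟩

lemma vecR_mem_latticeZ (z : Fin n → ℤ) : vecR z ∈ latticeZ n := fun i => ⟨z i, rfl⟩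

lemma add_mem_latticeZ {x y : Fin n → ℝ} (hx : x ∈ latticeZ n) (hy : y ∈ latticeZ n) :
    x + y ∈ latticeZ n := fun i => by
  obtain ⟨a, ha⟩ := hx i
  obtain ⟨b, hb⟩ := hy i
  exact ⟨a + b, by simp [ha, hb]⟩

lemma sub_mem_latticeZ {x y : Fin n → ℝ} (hx : x ∈ latticeZ n) (hy : y ∈ latticeZ n) :
    x - y ∈ latticeZ n := fun i => by
  obtain ⟨a, ha⟩ := hx i
  obtain ⟨b, hb⟩ := hy i
  exact ⟨a - b, by simp [ha, hb]⟩

lemma intCast_smul_mem_latticeZ (k : ℤ) {x : Fin n → ℝ} (hx : x ∈ latticeZ n) :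
    (k : ℝ) • x ∈ latticeZ n := fun i => by
  obtain ⟨a, ha⟩ := hx i
  exact ⟨k * a, by simp [ha]⟩

lemma toR_mulVec_mem_latticeZ (C : Matrix (Fin n) (Fin n) ℤ) {x : Fin n → ℝ}
    (hx : x ∈ latticeZ n) : toR C *ᵥ x ∈ latticeZ n := by
  obtain ⟨z, rfl⟩ := mem_latticeZ_iff.mp hx
  rw [toR_mulVec_vecR]
  exact vecR_mem_latticeZ _

lemma vecR_round_of_mem_latticeZ {x : Fin n → ℝ} (hx : x ∈ latticeZ n) :
    vecR (fun i => round (x i)) = x := by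
  funext i
  obtain ⟨k, hk⟩ := hx i
  simp [vecR, hk]

lemma mem_latticeZ_of_isCoprime {p q : ℤ} (hpq : IsCoprime p q) {x : Fin n → ℝ}
    (hp : (p : ℝ) • x ∈ latticeZ n) (hq : (q : ℝ) • x ∈ latticeZ n) : x ∈ latticeZ n := by
  obtain ⟨a, b, hab⟩ := hpq
  have hx : x = (a : ℝ) • ((p : ℝ) • x) + (b : ℝ) • ((q : ℝ) • x) := by
    rw [smul_smul, smul_smul, ← add_smul, ← Int.cast_mul, ← Int.cast_mul, ← Int.cast_add, hab,
      Int.cast_one, one_smul]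
  rw [hx]
  exact add_mem_latticeZ (intCast_smul_mem_latticeZ a hp) (intCast_smul_mem_latticeZ b hq)

/-- Cramer's rule: `det C • x = adj C (C x)`. -/
lemma det_smul_mem_latticeZ (C : Matrix (Fin n) (Fin n) ℤ) {x : Fin n → ℝ}
    (h : toR C *ᵥ x ∈ latticeZ n) : (C.det : ℝ) • x ∈ latticeZ n := by
  have hadj : toR C.adjugate * toR C = (C.det : ℝ) • 1 := by
    rw [toR_eq_mapMatrix, toR_eq_mapMatrix, ← map_mul, adjugate_mul, map_zsmul, map_one,
      Int.cast_smul_eq_zsmul]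
  rw [← one_mulVec x, ← smul_mulVec, ← hadj, ← mulVec_mulVec]
  exact toR_mulVec_mem_latticeZ _ h

lemma mask_add_of_mem_latticeZ (D : Finset (Fin n → ℤ)) (x : Fin n → ℝ) {z : Fin n → ℝ}
    (hz : z ∈ latticeZ n) : mask D (x + z) = mask D x := by
  obtain ⟨w, rfl⟩ := mem_latticeZ_iff.mp hz
  unfold mask
  congr 1
  refine Finset.sum_congr rfl fun d _ => ?_
  have hsplit : dotR (vecR d) (x + vecR w) = dotR (vecR d) x + dotR (vecR d) (vecR w) := by
    simp [dotR, mul_add, Finset.sum_add_distrib]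
  rw [hsplit, dotR_vecR_vecR, Complex.ofReal_add, mul_add, Complex.exp_add]
  convert mul_one _
  convert Complex.exp_int_mul_two_pi_mul_I (d ⬝ᵥ w) using 2
  push_cast
  ring

lemma mask_zero {D : Finset (Fin n → ℤ)} (hD : D.Nonempty) : mask D 0 = 1 := by
  have hcard : (D.card : ℂ) ≠ 0 := Nat.cast_ne_zero.mpr hD.card_pos.ne'
  simp [mask, dotR, hcard]

lemma eq_image_of_forall_mem_iff {C : Matrix (Fin n) (Fin n) ℤ} {E F : Finset (Fin n → ℤ)}
    (h : ∀ d, d ∈ E ↔ ∃ f ∈ F, d = C *ᵥ f) : E = F.image (C *ᵥ ·) := by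
  ext d
  simp only [h, Finset.mem_image, eq_comm]

lemma mask_image_mulVec {C : Matrix (Fin n) (Fin n) ℤ} (hC : C.det ≠ 0)
    (E : Finset (Fin n → ℤ)) (x : Fin n → ℝ) :
    mask (E.image (C *ᵥ ·)) x = mask E ((toR C)ᵀ *ᵥ x) := by
  have hinj := mulVec_injective_of_det_ne_zero hC
  unfold mask
  rw [Finset.card_image_of_injective _ hinj, Finset.sum_image fun a _ b _ h => hinj h]
  congr 1
  refine Finset.sum_congr rfl fun d _ => ?_
  rw [← toR_mulVec_vecR]
  change cexp (2 * π * I * ((toR C *ᵥ vecR d) ⬝ᵥ x : ℝ)) =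
    cexp (2 * π * I * (vecR d ⬝ᵥ ((toR C)ᵀ *ᵥ x) : ℝ))
  rw [dotProduct_mulVec, vecMul_transpose]

lemma modEq_iff_map_eq {p : ℕ} {X Y : Matrix (Fin n) (Fin n) ℤ} :
    ModEq p X Y ↔
      (Int.castRingHom (ZMod p)).mapMatrix X = (Int.castRingHom (ZMod p)).mapMatrix Y := by
  simp only [ModEq, ← Matrix.ext_iff, RingHom.mapMatrix_apply, map_apply, eq_intCast,
    ZMod.intCast_eq_intCast_iff_dvd_sub, dvd_sub_comm]

lemma ModEq.mul_comm {p : ℕ} {A B : Matrix (Fin n) (Fin n) ℤ} (h : ModEq p (A * B) 1) :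
    ModEq p (B * A) 1 := by
  rw [modEq_iff_map_eq, map_mul, map_one] at h ⊢
  exact mul_eq_one_comm.mp h

lemma ModEq.transpose_mulVec_sub_mem_latticeZ {p : ℕ} {C : Matrix (Fin n) (Fin n) ℤ}
    (hC : ModEq p C 1) {x : Fin n → ℝ} (hx : (p : ℝ) • x ∈ latticeZ n) :
    (toR C)ᵀ *ᵥ x - x ∈ latticeZ n := by
  choose G hG using hC
  have hCG : toR C = 1 + (p : ℝ) • toR (Matrix.of G) := by
    ext i j
    have := congrArg (Int.cast : ℤ → ℝ) (hG i j)
    push_cast at this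
    simp [toR, Matrix.one_apply] at this ⊢
    linarith
  rw [hCG, transpose_add, transpose_one, add_mulVec, one_mulVec, add_sub_cancel_left,
    transpose_smul, smul_mulVec, ← mulVec_smul]
  exact toR_mulVec_mem_latticeZ _ hx

lemma mask_transpose_mulVec_of_modEq {p : ℕ} {C : Matrix (Fin n) (Fin n) ℤ}
    (hC : ModEq p C 1) (D : Finset (Fin n → ℤ)) {x : Fin n → ℝ}
    (hx : (p : ℝ) • x ∈ latticeZ n) : mask D ((toR C)ᵀ *ᵥ x) = mask D x := by
  rw [← add_sub_cancel x ((toR C)ᵀ *ᵥ x), mask_add_of_mem_latticeZ D x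
    (hC.transpose_mulVec_sub_mem_latticeZ hx)]

def ZerosInLatticeDiv (p : ℕ) (D : Finset (Fin n → ℤ)) : Prop :=
  ∀ x, mask D x = 0 → (p : ℝ) • x ∈ latticeZ n

lemma zerosInLatticeDiv_of_ZDn_subset {p : ℕ} (hp : p ≠ 0) {D : Finset (Fin n → ℤ)}
    (h : ZDn D ⊆ Ering p n) : ZerosInLatticeDiv p D := by
  intro x hx
  have hp' : (p : ℝ) ≠ 0 := Nat.cast_ne_zero.mpr hp
  set y : Fin n → ℝ := fun i => Int.fract (x i)
  have hxy : x = y + vecR (fun i => ⌊x i⌋) := funext fun i => (Int.fract_add_floor (x i)).symm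
  rw [hxy, mask_add_of_mem_latticeZ D y (vecR_mem_latticeZ _)] at hx
  obtain ⟨⟨l, -, hl⟩, -⟩ := h ⟨hx, fun i => ⟨Int.fract_nonneg _, Int.fract_lt_one _⟩⟩
  have hpy : (p : ℝ) • y = vecR (fun i => (l i : ℤ)) := by
    funext i
    simp [hl i, vecR, field]
  rw [hxy, smul_add, hpy]
  exact add_mem_latticeZ (vecR_mem_latticeZ _)
    (intCast_smul_mem_latticeZ p (vecR_mem_latticeZ _))

lemma ZerosInLatticeDiv.of_image {p : ℕ} {C : Matrix (Fin n) (Fin n) ℤ} (hC : C.det ≠ 0)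
    {E : Finset (Fin n → ℤ)} (h : ZerosInLatticeDiv p (E.image (C *ᵥ ·))) :
    ZerosInLatticeDiv p E := by
  intro x hx
  set y := ((toR C)ᵀ)⁻¹ *ᵥ x
  have hxy : (toR C)ᵀ *ᵥ y = x := by
    rw [mulVec_mulVec, mul_nonsing_inv _ (isUnit_det_transpose_toR hC), one_mulVec]
  have hy := h y (by rwa [mask_image_mulVec hC, hxy])
  rw [← hxy, ← mulVec_smul]
  exact toR_mulVec_mem_latticeZ Cᵀ hy

/-- `Λ = M⁻ᵀ S` for a set `S ⊂ ℤ^n` witnessing that `(M, D)` is admissible. -/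
structure IsHadamardSet (M : Matrix (Fin n) (Fin n) ℤ) (D : Finset (Fin n → ℤ))
    (Λ : Finset (Fin n → ℝ)) : Prop where
  card_eq : Λ.card = D.card
  transpose_mulVec_mem : ∀ x ∈ Λ, (toR M)ᵀ *ᵥ x ∈ latticeZ n
  mask_sub_eq_zero : (Λ : Set (Fin n → ℝ)).Pairwise fun x y => mask D (x - y) = 0

def hadamardMatrix (M : Matrix (Fin n) (Fin n) ℤ) (D S : Finset (Fin n → ℤ)) :
    Matrix {d // d ∈ D} {s // s ∈ S} ℂ := fun d s =>
  ((1 : ℂ) / (Real.sqrt S.card : ℂ)) *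
    Complex.exp (2 * Real.pi * Complex.I *
      (dotR ((toR M)⁻¹.mulVec (vecR (d : Fin n → ℤ))) (vecR (s : Fin n → ℤ))))

lemma admissible_iff_hadamardMatrix {M : Matrix (Fin n) (Fin n) ℤ} {D : Finset (Fin n → ℤ)} :
    Admissible M D ↔ ∃ S : Finset (Fin n → ℤ), S.card = D.card ∧
      (hadamardMatrix M D S)ᴴ * hadamardMatrix M D S = 1 :=
  Iff.rfl

lemma star_mul_exp_two_pi_I (c a b : ℝ) :
    star ((c : ℂ) * cexp (2 * π * I * a)) * ((c : ℂ) * cexp (2 * π * I * b)) =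
      ((c ^ 2 : ℝ) : ℂ) * cexp (2 * π * I * ((b - a : ℝ) : ℂ)) := by
  rw [star_mul', Complex.star_def, Complex.conj_ofReal, ← Complex.exp_conj]
  simp only [map_mul, Complex.conj_ofReal, Complex.conj_I, map_ofNat]
  rw [mul_mul_mul_comm, ← Complex.exp_add]
  push_cast
  ring_nf

lemma conjTranspose_hadamardMatrix_mul_self_apply {M : Matrix (Fin n) (Fin n) ℤ}
    {D S : Finset (Fin n → ℤ)} (hS : S.card = D.card) (s s' : {s // s ∈ S}) :
    ((hadamardMatrix M D S)ᴴ * hadamardMatrix M D S) s s' =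
      mask D (((toR M)ᵀ)⁻¹ *ᵥ (vecR (s' : Fin n → ℤ) - vecR (s : Fin n → ℤ))) := by
  have hsq : Real.sqrt S.card ^ 2 = D.card := by rw [Real.sq_sqrt (Nat.cast_nonneg _), hS]
  rw [mul_apply]
  simp only [conjTranspose_apply, hadamardMatrix, one_div, ← Complex.ofReal_inv]
  simp only [star_mul_exp_two_pi_I, inv_pow, hsq]
  rw [← Finset.mul_sum, mask, Complex.ofReal_inv, Complex.ofReal_natCast]
  congr 1
  rw [← Finset.sum_coe_sort D]
  refine Finset.sum_congr rfl fun d _ => ?_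
  have harg : dotR ((toR M)⁻¹ *ᵥ vecR d) (vecR s') - dotR ((toR M)⁻¹ *ᵥ vecR d) (vecR s) =
      dotR (vecR d) (((toR M)ᵀ)⁻¹ *ᵥ (vecR s' - vecR s)) := by
    simp only [dotR, ← dotProduct.eq_1]
    rw [← dotProduct_sub, ← vecMul_transpose, ← dotProduct_mulVec, transpose_nonsing_inv]
  rw [harg]

section HadamardSet

variable {M : Matrix (Fin n) (Fin n) ℤ} {D : Finset (Fin n → ℤ)} {Λ : Finset (Fin n → ℝ)}

lemma Admissible.exists_isHadamardSet (hM : M.det ≠ 0) (h : Admissible M D) :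
    ∃ Λ, IsHadamardSet M D Λ := by
  obtain ⟨S, hS, hH⟩ := admissible_iff_hadamardMatrix.mp h
  have hunit := isUnit_det_transpose_toR hM
  set f : (Fin n → ℤ) → Fin n → ℝ := fun s => ((toR M)ᵀ)⁻¹ *ᵥ vecR s
  have hMf : ∀ s, (toR M)ᵀ *ᵥ f s = vecR s := fun s => by
    rw [mulVec_mulVec, mul_nonsing_inv _ hunit, one_mulVec]
  have hf : Function.Injective f := fun s s' h => vecR_injective (by rw [← hMf, h, hMf])
  refine ⟨S.image f, ?_, ?_, ?_⟩
  · rw [Finset.card_image_of_injective _ hf, hS]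
  · simp only [Finset.mem_image]
    rintro _ ⟨s, -, rfl⟩
    rw [hMf]
    exact vecR_mem_latticeZ s
  · simp only [Finset.coe_image]
    rintro _ ⟨s, hs, rfl⟩ _ ⟨s', hs', rfl⟩ hne
    have hss' : (⟨s', hs'⟩ : {s // s ∈ S}) ≠ ⟨s, hs⟩ := fun h => hne (by cases h; rfl)
    have := congrFun (congrFun hH ⟨s', hs'⟩) ⟨s, hs⟩
    rwa [conjTranspose_hadamardMatrix_mul_self_apply hS, one_apply_ne hss', mulVec_sub] at this

lemma IsHadamardSet.admissible (hM : M.det ≠ 0) (h : IsHadamardSet M D Λ) : Admissible M D := by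
  have hunit := isUnit_det_transpose_toR hM
  set g : (Fin n → ℝ) → Fin n → ℤ := fun x i => round (((toR M)ᵀ *ᵥ x) i)
  have hg : ∀ x ∈ Λ, vecR (g x) = (toR M)ᵀ *ᵥ x := fun x hx =>
    vecR_round_of_mem_latticeZ (h.transpose_mulVec_mem x hx)
  have hgx : ∀ x ∈ Λ, ((toR M)ᵀ)⁻¹ *ᵥ vecR (g x) = x := fun x hx => by
    rw [hg x hx, mulVec_mulVec, nonsing_inv_mul _ hunit, one_mulVec]
  have hinj : Set.InjOn g Λ := fun x hx y hy hxy => by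
    rw [← hgx x hx, ← hgx y hy, hxy]
  have hcard : (Λ.image g).card = D.card := by rw [Finset.card_image_of_injOn hinj, h.card_eq]
  refine admissible_iff_hadamardMatrix.mpr ⟨Λ.image g, hcard, ?_⟩
  ext ⟨s, hs⟩ ⟨s', hs'⟩
  obtain ⟨x, hx, rfl⟩ := Finset.mem_image.mp hs
  obtain ⟨y, hy, rfl⟩ := Finset.mem_image.mp hs'
  rw [conjTranspose_hadamardMatrix_mul_self_apply hcard, mulVec_sub, hgx x hx, hgx y hy]
  by_cases hxy : x = y
  · subst hxy
    rw [one_apply_eq, sub_self, mask_zero]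
    exact Finset.card_pos.mp (h.card_eq ▸ Finset.card_pos.mpr ⟨x, hx⟩)
  · have hne : (⟨g x, hs⟩ : {s // s ∈ Λ.image g}) ≠ ⟨g y, hs'⟩ :=
      fun h => hxy (hinj hx hy (congrArg Subtype.val h))
    rw [one_apply_ne hne]
    exact h.mask_sub_eq_zero hy hx (Ne.symm hxy)

lemma admissible_iff_exists_isHadamardSet (hM : M.det ≠ 0) :
    Admissible M D ↔ ∃ Λ, IsHadamardSet M D Λ :=
  ⟨Admissible.exists_isHadamardSet hM, fun ⟨_, h⟩ => h.admissible hM⟩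

lemma IsHadamardSet.exists_zero_or_mask_eq_zero (h : IsHadamardSet M D Λ) :
    ∃ Λ', IsHadamardSet M D Λ' ∧ ∀ x ∈ Λ', x = 0 ∨ mask D x = 0 := by
  rcases Λ.eq_empty_or_nonempty with rfl | ⟨x₀, hx₀⟩
  · exact ⟨∅, h, by simp⟩
  refine ⟨Λ.image (· - x₀), ⟨?_, ?_, ?_⟩, ?_⟩
  · rw [Finset.card_image_of_injective _ (sub_left_injective), h.card_eq]
  · simp only [Finset.mem_image]
    rintro _ ⟨x, hx, rfl⟩
    rw [mulVec_sub]
    exact sub_mem_latticeZ (h.transpose_mulVec_mem x hx) (h.transpose_mulVec_mem x₀ hx₀)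
  · simp only [Finset.coe_image]
    rintro _ ⟨x, hx, rfl⟩ _ ⟨y, hy, rfl⟩ hne
    rw [sub_sub_sub_cancel_right]
    exact h.mask_sub_eq_zero hx hy fun e => hne (by rw [e])
  · simp only [Finset.mem_image]
    rintro _ ⟨x, hx, rfl⟩
    by_cases e : x = x₀
    · exact Or.inl (sub_eq_zero.mpr e)
    · exact Or.inr (h.mask_sub_eq_zero hx hx₀ e)

lemma IsHadamardSet.exists_smul_mem_latticeZ {p : ℕ} (h : IsHadamardSet M D Λ)
    (hZ : ZerosInLatticeDiv p D) :
    ∃ Λ', IsHadamardSet M D Λ' ∧ ∀ x ∈ Λ', (p : ℝ) • x ∈ latticeZ n := by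
  obtain ⟨Λ', h', h0⟩ := h.exists_zero_or_mask_eq_zero
  refine ⟨Λ', h', fun x hx => (h0 x hx).elim (fun hx0 => ?_) (hZ x)⟩
  rw [hx0, smul_zero]
  exact zero_mem_latticeZ

lemma IsHadamardSet.image {M' : Matrix (Fin n) (Fin n) ℤ} {D' : Finset (Fin n → ℤ)}
    (h : IsHadamardSet M D Λ) {C : Matrix (Fin n) (Fin n) ℝ} (hC : C.det ≠ 0)
    (hcard : D.card = D'.card) (hlat : ∀ x ∈ Λ, (toR M')ᵀ *ᵥ (C *ᵥ x) ∈ latticeZ n)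
    (hmask : ∀ x ∈ Λ, ∀ y ∈ Λ, mask D' (C *ᵥ (x - y)) = mask D (x - y)) :
    IsHadamardSet M' D' (Λ.image (C *ᵥ ·)) := by
  have hinj := mulVec_injective_of_det_ne_zero hC
  refine ⟨?_, ?_, ?_⟩
  · rw [Finset.card_image_of_injective _ hinj, h.card_eq, hcard]
  · simp only [Finset.mem_image]
    rintro _ ⟨x, hx, rfl⟩
    exact hlat x hx
  · simp only [Finset.coe_image]
    rintro _ ⟨x, hx, rfl⟩ _ ⟨y, hy, rfl⟩ hne
    rw [← mulVec_sub, hmask x hx y hy]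
    exact h.mask_sub_eq_zero hx hy fun e => hne (by rw [e])

end HadamardSet

section Conjugate

variable {p : ℕ} {A B M : Matrix (Fin n) (Fin n) ℤ}

lemma mem_latticeZ_of_transpose_mulVec (hB : IsCoprime (p : ℤ) B.det) {y : Fin n → ℝ}
    (hBy : (toR B)ᵀ *ᵥ y ∈ latticeZ n) (hpy : (p : ℝ) • y ∈ latticeZ n) : y ∈ latticeZ n := by
  refine mem_latticeZ_of_isCoprime hB (by exact_mod_cast hpy) ?_
  rw [← det_transpose]
  exact det_smul_mem_latticeZ Bᵀ hBy

lemma transpose_mulVec_mem_latticeZ_of_conj (hB : IsCoprime (p : ℤ) B.det) {x : Fin n → ℝ}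
    (hx : (toR (A * M * B))ᵀ *ᵥ x ∈ latticeZ n) (hAx : (p : ℝ) • ((toR A)ᵀ *ᵥ x) ∈ latticeZ n) :
    (toR M)ᵀ *ᵥ ((toR A)ᵀ *ᵥ x) ∈ latticeZ n := by
  refine mem_latticeZ_of_transpose_mulVec hB ?_ ?_
  · rwa [toR_mul_transpose_mulVec, toR_mul_transpose_mulVec] at hx
  · rw [← mulVec_smul]
    exact toR_mulVec_mem_latticeZ Mᵀ hAx

/-- With `w = det B • x`, `Aᵀ Bᵀ w ≡ w` modulo `ℤ^n` because `BA ≡ I (mod p)`, which makes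
`det B • (AMB)ᵀ Bᵀ x = Bᵀ Mᵀ Aᵀ Bᵀ w` integral; `p •` of it is integral as well. -/
lemma conj_transpose_mulVec_mem_latticeZ (hB : IsCoprime (p : ℤ) B.det)
    (hBA : ModEq p (B * A) 1) {x : Fin n → ℝ} (hMx : (toR M)ᵀ *ᵥ x ∈ latticeZ n)
    (hBx : (p : ℝ) • ((toR B)ᵀ *ᵥ x) ∈ latticeZ n) :
    (toR (A * M * B))ᵀ *ᵥ ((toR B)ᵀ *ᵥ x) ∈ latticeZ n := by
  rw [toR_mul_transpose_mulVec, toR_mul_transpose_mulVec]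
  set w := (B.det : ℝ) • x
  have hpw : (p : ℝ) • w ∈ latticeZ n := by
    rw [smul_comm, ← det_transpose]
    exact det_smul_mem_latticeZ Bᵀ (by rwa [mulVec_smul])
  have hABw := hBA.transpose_mulVec_sub_mem_latticeZ hpw
  rw [toR_mul_transpose_mulVec] at hABw
  refine mem_latticeZ_of_isCoprime hB ?_ ?_
  · rw [Int.cast_natCast, ← mulVec_smul, ← mulVec_smul, ← mulVec_smul]
    exact toR_mulVec_mem_latticeZ Bᵀ (toR_mulVec_mem_latticeZ Mᵀ
      (toR_mulVec_mem_latticeZ Aᵀ hBx))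
  · have hsplit : (B.det : ℝ) • ((toR B)ᵀ *ᵥ ((toR M)ᵀ *ᵥ ((toR A)ᵀ *ᵥ ((toR B)ᵀ *ᵥ x)))) =
        (toR B)ᵀ *ᵥ ((B.det : ℝ) • ((toR M)ᵀ *ᵥ x) +
          (toR M)ᵀ *ᵥ ((toR A)ᵀ *ᵥ ((toR B)ᵀ *ᵥ w) - w)) := by
      simp only [w, mulVec_smul, mulVec_sub, add_sub_cancel]
    rw [hsplit]
    exact toR_mulVec_mem_latticeZ Bᵀ (add_mem_latticeZ (intCast_smul_mem_latticeZ _ hMx)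
      (toR_mulVec_mem_latticeZ Mᵀ hABw))

lemma exists_isHadamardSet_image_right_iff {Dt : Finset (Fin n → ℤ)} (hA : A.det ≠ 0)
    (hB : B.det ≠ 0) (hBp : IsCoprime (p : ℤ) B.det) (hAB : ModEq p (A * B) 1)
    (hZ : ZerosInLatticeDiv p Dt) :
    (∃ Λ, IsHadamardSet M (Dt.image (B *ᵥ ·)) Λ) ↔ ∃ Λ, IsHadamardSet (A * M * B) Dt Λ := by
  have hcard := Finset.card_image_of_injective Dt (mulVec_injective_of_det_ne_zero hB)
  constructor
  · rintro ⟨Λ₀, h₀⟩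
    obtain ⟨Λ, h, h0⟩ := h₀.exists_zero_or_mask_eq_zero
    have hpB : ∀ x ∈ Λ, (p : ℝ) • ((toR B)ᵀ *ᵥ x) ∈ latticeZ n := fun x hx => by
      rcases h0 x hx with rfl | hx0
      · simpa using zero_mem_latticeZ
      · exact hZ _ (by rwa [← mask_image_mulVec hB])
    exact ⟨_, h.image (isUnit_det_transpose_toR hB).ne_zero hcard
      (fun x hx => conj_transpose_mulVec_mem_latticeZ hBp hAB.mul_comm
        (h.transpose_mulVec_mem x hx) (hpB x hx))
      (fun x _ y _ => (mask_image_mulVec hB _ _).symm)⟩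
  · rintro ⟨Λ₀, h₀⟩
    obtain ⟨Λ, h, hp⟩ := h₀.exists_smul_mem_latticeZ hZ
    refine ⟨_, h.image (isUnit_det_transpose_toR hA).ne_zero hcard.symm
      (fun x hx => transpose_mulVec_mem_latticeZ_of_conj hBp (h.transpose_mulVec_mem x hx)
        (by rw [← mulVec_smul]; exact toR_mulVec_mem_latticeZ Aᵀ (hp x hx)))
      (fun x hx y hy => ?_)⟩
    have hpxy : (p : ℝ) • (x - y) ∈ latticeZ n := by
      rw [smul_sub]
      exact sub_mem_latticeZ (hp x hx) (hp y hy)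
    rw [mask_image_mulVec hB, ← toR_mul_transpose_mulVec,
      mask_transpose_mulVec_of_modEq hAB _ hpxy]

lemma exists_isHadamardSet_image_left_iff {D : Finset (Fin n → ℤ)} (hA : A.det ≠ 0)
    (hB : B.det ≠ 0) (hBp : IsCoprime (p : ℤ) B.det) (hAB : ModEq p (A * B) 1)
    (hZ : ZerosInLatticeDiv p D) :
    (∃ Λ, IsHadamardSet M D Λ) ↔ ∃ Λ, IsHadamardSet (A * M * B) (D.image (A *ᵥ ·)) Λ := by
  have hcard := Finset.card_image_of_injective D (mulVec_injective_of_det_ne_zero hA)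
  constructor
  · rintro ⟨Λ₀, h₀⟩
    obtain ⟨Λ, h, hp⟩ := h₀.exists_smul_mem_latticeZ hZ
    refine ⟨_, h.image (isUnit_det_transpose_toR hB).ne_zero hcard.symm
      (fun x hx => conj_transpose_mulVec_mem_latticeZ hBp hAB.mul_comm
        (h.transpose_mulVec_mem x hx)
        (by rw [← mulVec_smul]; exact toR_mulVec_mem_latticeZ Bᵀ (hp x hx)))
      (fun x hx y hy => ?_)⟩
    have hpxy : (p : ℝ) • (x - y) ∈ latticeZ n := by
      rw [smul_sub]
      exact sub_mem_latticeZ (hp x hx) (hp y hy)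
    rw [mask_image_mulVec hA, ← toR_mul_transpose_mulVec,
      mask_transpose_mulVec_of_modEq hAB.mul_comm _ hpxy]
  · rintro ⟨Λ₀, h₀⟩
    obtain ⟨Λ, h, h0⟩ := h₀.exists_zero_or_mask_eq_zero
    have hpA : ∀ x ∈ Λ, (p : ℝ) • ((toR A)ᵀ *ᵥ x) ∈ latticeZ n := fun x hx => by
      rcases h0 x hx with rfl | hx0
      · simpa using zero_mem_latticeZ
      · exact hZ _ (by rwa [← mask_image_mulVec hA])
    exact ⟨_, h.image (isUnit_det_transpose_toR hA).ne_zero hcard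
      (fun x hx => transpose_mulVec_mem_latticeZ_of_conj hBp (h.transpose_mulVec_mem x hx)
        (hpA x hx))
      (fun x _ y _ => (mask_image_mulVec hA _ _).symm)⟩

end Conjugate

theorem admissible_iff_of_conjugate_general {n : ℕ} {p : ℕ} (hp : p.Prime)
    (M Mt : Matrix (Fin n) (Fin n) ℤ) (D Dt : Finset (Fin n → ℤ))
    (hM : IsExpanding M) (hMt : IsExpanding Mt)
    (hconj : ConjugateGL p M Mt D Dt)
    (hZ : ZDn Dt ⊆ Ering p n ∨ ZDn D ⊆ Ering p n) :
    Admissible M D ↔ Admissible Mt Dt := by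
  obtain ⟨A, B, hA, hB, hAB, rfl, hD⟩ := hconj
  have hAdet : A.det ≠ 0 := fun h => hA (h ▸ dvd_zero _)
  have hBdet : B.det ≠ 0 := fun h => hB (h ▸ dvd_zero _)
  have hBp : IsCoprime (p : ℤ) B.det := (Nat.prime_iff_prime_int.mp hp).coprime_iff_not_dvd.mpr hB
  have hZ' := hZ.imp (zerosInLatticeDiv_of_ZDn_subset hp.ne_zero)
    (zerosInLatticeDiv_of_ZDn_subset hp.ne_zero)
  rw [admissible_iff_exists_isHadamardSet hM.det_ne_zero,
    admissible_iff_exists_isHadamardSet hMt.det_ne_zero]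
  rcases hD with hD | hD
  · obtain rfl := eq_image_of_forall_mem_iff hD
    exact exists_isHadamardSet_image_right_iff hAdet hBdet hBp hAB
      (hZ'.elim id (ZerosInLatticeDiv.of_image hBdet))
  · obtain rfl := eq_image_of_forall_mem_iff hD
    exact exists_isHadamardSet_image_left_iff hAdet hBdet hBp hAB
      (hZ'.elim (ZerosInLatticeDiv.of_image hAdet) id)

/-- If `(M,D)` and `(M̃,D̃)` are conjugate in `GL_n(p)` and
`Z_{D̃}^n ⊆ E̊_p^n` or `Z_D^n ⊆ E̊_p^n`, then `(M,D)` is admissible iff `(M̃,D̃)` is. -/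
theorem admissible_iff_of_conjugate {n : ℕ} (hn : 1 ≤ n) {p : ℕ} (hp : p.Prime)
    (M Mt : Matrix (Fin n) (Fin n) ℤ) (D Dt : Finset (Fin n → ℤ))
    (hM : IsExpanding M) (hMt : IsExpanding Mt)
    (hconj : ConjugateGL p M Mt D Dt)
    (hZ : ZDn Dt ⊆ Ering p n ∨ ZDn D ⊆ Ering p n) :
    Admissible M D ↔ Admissible Mt Dt :=
  admissible_iff_of_conjugate_general hp M Mt D Dt hM hMt hconj hZ

end SA
end
end

section
/- Let p be a prime and M ∈ M_n(ℤ) an expanding matrix with det(M) = L satisfying gcd(L,p) = 1. Then for every integer j ≥ 0 and every λ ∈ E̊_p^n, one has L^{φ(p)·j}·(M^j λ + ℤ^n) ⊆ M^j(λ + ℤ^n), where φ is Euler's totient function (so φ(p) = p−1). -/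
open MeasureTheory Matrix Set Complex
open scoped Real Pointwise ENNReal

noncomputable section

namespace SA

variable {n : ℕ}

/-! Write `c = L^{φ(p) j}` and `A = M^j`. Since `L^j = det A` divides `c`, the vector `c v` lies in
`A ℤ^n` (via the adjugate), and since `c ≡ 1 (mod p)` by Euler's theorem while `p λ ∈ ℤ^n`,
also `(c - 1) λ ∈ ℤ^n`. Hence `c (A λ + v) = A (λ + (c - 1) λ) + c v ∈ A (λ + ℤ^n)`. -/

theorem _root_.Int.ModEq.pow_totient {x : ℤ} {m : ℕ} (h : IsCoprime x m) :
    x ^ Nat.totient m ≡ 1 [ZMOD m] := by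
  obtain ⟨u, hu⟩ := (ZMod.coe_int_isUnit_iff_isCoprime x m).mpr h.symm
  rw [← ZMod.intCast_eq_intCast_iff, Int.cast_pow, ← hu, ← Units.val_pow_eq_pow_val,
    ZMod.pow_totient, Units.val_one, Int.cast_one]

theorem toR_pow (M : Matrix (Fin n) (Fin n) ℤ) (j : ℕ) : toR (M ^ j) = toR M ^ j :=
  map_pow (Int.castRingHom ℝ).mapMatrix M j

theorem toR_mulVec_vecR_s9 (A : Matrix (Fin n) (Fin n) ℤ) (u : Fin n → ℤ) :
    (toR A).mulVec (vecR u) = vecR (A.mulVec u) :=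
  funext fun i => (RingHom.map_mulVec (Int.castRingHom ℝ) A u i).symm

theorem vecR_add (u w : Fin n → ℤ) : vecR (u + w) = vecR u + vecR w :=
  funext fun i => Int.cast_add (u i) (w i)

theorem vecR_smul (c : ℤ) (u : Fin n → ℤ) : vecR (c • u) = (c : ℝ) • vecR u :=
  funext fun i => Int.cast_mul c (u i)

theorem exists_mulVec_eq_smul_of_det_dvd (A : Matrix (Fin n) (Fin n) ℤ) {c : ℤ}
    (hc : A.det ∣ c) (v : Fin n → ℤ) : ∃ u, A.mulVec u = c • v := by
  obtain ⟨e, rfl⟩ := hc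
  refine ⟨e • (adjugate A).mulVec v, ?_⟩
  rw [mulVec_smul, mulVec_mulVec, mul_adjugate, smul_mulVec, one_mulVec, smul_smul, mul_comm]

theorem exists_smul_eq_vecR_of_mem_Ering {p : ℕ} (hp : p ≠ 0) {lam : Fin n → ℝ}
    (hlam : lam ∈ Ering p n) : ∃ l : Fin n → ℤ, (p : ℝ) • lam = vecR l := by
  obtain ⟨⟨l, -, hl⟩, -⟩ := hlam
  refine ⟨fun i => l i, funext fun i => ?_⟩
  simp only [Pi.smul_apply, smul_eq_mul, hl i, vecR, Int.cast_natCast]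
  field_simp

theorem exists_smul_mulVec_add_vecR_eq {q : ℕ} (A : Matrix (Fin n) (Fin n) ℤ) {c : ℤ}
    (hdet : A.det ∣ c) (hc : c ≡ 1 [ZMOD q]) {lam : Fin n → ℝ} {l : Fin n → ℤ}
    (hl : (q : ℝ) • lam = vecR l) (v : Fin n → ℤ) :
    ∃ w : Fin n → ℤ, (c : ℝ) • ((toR A).mulVec lam + vecR v) = (toR A).mulVec (lam + vecR w) := by
  obtain ⟨u, hu⟩ := exists_mulVec_eq_smul_of_det_dvd A hdet v
  obtain ⟨k, hk⟩ := hc.symm.dvd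
  refine ⟨k • l + u, ?_⟩
  have hkq : (c : ℝ) - 1 = k * q := by exact_mod_cast hk.trans (mul_comm _ _)
  have hcv : (c : ℝ) • vecR v = (toR A).mulVec (vecR u) := by
    rw [toR_mulVec_vecR_s9, hu, vecR_smul]
  calc (c : ℝ) • ((toR A).mulVec lam + vecR v)
      = (toR A).mulVec lam + ((c : ℝ) - 1) • (toR A).mulVec lam + (c : ℝ) • vecR v := by
        module
    _ = (toR A).mulVec (lam + vecR (k • l + u)) := by
        rw [hcv, hkq, vecR_add, vecR_smul, ← hl, mul_smul, ← mulVec_smul, ← mulVec_smul,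
          ← mulVec_add, ← mulVec_add, add_assoc]

theorem pow_smul_subset_general {n : ℕ} {p : ℕ} (hp : p.Prime)
    (M : Matrix (Fin n) (Fin n) ℤ)
    (L : ℤ) (hLdet : M.det = L) (hcop : Int.gcd L (p : ℤ) = 1)
    (j : ℕ) (lam : Fin n → ℝ) (hlam : lam ∈ Ering p n) :
    ∀ v : Fin n → ℤ, ∃ w : Fin n → ℤ,
      ((L ^ (Nat.totient p * j) : ℤ) : ℝ) • (((toR M) ^ j).mulVec lam + vecR v) =
        ((toR M) ^ j).mulVec (lam + vecR w) := by
  have hdet : (M ^ j).det ∣ L ^ (Nat.totient p * j) := by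
    rw [det_pow, hLdet, pow_mul]
    exact pow_dvd_pow_of_dvd (dvd_pow_self L (Nat.totient_pos.mpr hp.pos).ne') j
  have heuler : L ^ (Nat.totient p * j) ≡ 1 [ZMOD p] := by
    simpa [pow_mul] using (Int.ModEq.pow_totient (Int.isCoprime_iff_gcd_eq_one.mpr hcop)).pow j
  obtain ⟨l, hl⟩ := exists_smul_eq_vecR_of_mem_Ering hp.ne_zero hlam
  rw [← toR_pow]
  exact exists_smul_mulVec_add_vecR_eq (M ^ j) hdet heuler hl

/-- `L^{φ(p)·j}(M^j λ + ℤ^n) ⊆ M^j(λ + ℤ^n)`. -/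
theorem pow_smul_subset {n : ℕ} {p : ℕ} (hp : p.Prime)
    (M : Matrix (Fin n) (Fin n) ℤ) (hM : IsExpanding M)
    (L : ℤ) (hLdet : M.det = L) (hcop : Int.gcd L (p : ℤ) = 1)
    (j : ℕ) (lam : Fin n → ℝ) (hlam : lam ∈ Ering p n) :
    ∀ v : Fin n → ℤ, ∃ w : Fin n → ℤ,
      ((L ^ (Nat.totient p * j) : ℤ) : ℝ) • (((toR M) ^ j).mulVec lam + vecR v) =
        ((toR M) ^ j).mulVec (lam + vecR w) :=
  pow_smul_subset_general hp M L hLdet hcop j lam hlam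

end SA
end
end

section
/- Let a, b ≥ 3 be integers, M = [[0, 3b+1],[3a, 0]], D = {(0,0)^t, (1,0)^t, (2,9)^t} ⊂ ℤ², and C = {(0,0)^t, (1/3,0)^t, (2/3,0)^t}. For each integer m ≥ 1, let μ_m = δ_{M^{−1}D} * δ_{M^{−2}D} * ⋯ * δ_{M^{−m}D} and Λ_m = { Σ_{i=1}^{m} (M^t)^i c_i : c_i ∈ C }. Then Λ_m is a spectrum of μ_m; that is, {e^{2πi⟨λ,x⟩} : λ ∈ Λ_m} is an orthonormal basis of L²(μ_m). -/
/-!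
`μ_m` is the uniform measure on the `3^m` points `∑ M^{-(i+1)} d_i`, so `L²(μ_m)` has dimension at
most `3^m`, and `3^m` mutually orthogonal exponentials already form an orthonormal basis. For
`σ ≠ σ'` the Fourier sum `∑_ε e(⟨x_ε, λ_σ - λ_σ'⟩)` factorises over the digit positions. In the
factor of the first position `i₀` where `σ` and `σ'` differ, the positions `j > i₀` contribute
integers, because `M D ⊆ 3ℤ²` while `C - C ⊆ (1/3)ℤ × {0}`; what is left is `1 + ζ + ζ²` for a
nontrivial cube root of unity `ζ`, which vanishes.
-/

open MeasureTheory Matrix Set Complex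
open scoped Real Pointwise ENNReal

noncomputable section

namespace SA

variable {n : ℕ}

/-- Convolution of two measures on `ℝ²`. -/
def mconv (μ ν : Measure (Fin 2 → ℝ)) : Measure (Fin 2 → ℝ) :=
  (μ.prod ν).map (fun x => x.1 + x.2)

/-- The uniform atomic measure `δ_{N D}` for an integer digit set `D` pushed
through a real matrix `N`. -/
def uatom (N : Matrix (Fin 2) (Fin 2) ℝ) (D : Finset (Fin 2 → ℤ)) :
    Measure (Fin 2 → ℝ) :=
  (D.card : ℝ≥0∞)⁻¹ • ∑ d ∈ D, Measure.dirac (N.mulVec (vecR d))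

/-- `μ_m = δ_{M⁻¹D} * δ_{M⁻²D} * ⋯ * δ_{M⁻ᵐD}`. -/
def muN (M : Matrix (Fin 2) (Fin 2) ℝ) (D : Finset (Fin 2 → ℤ)) :
    ℕ → Measure (Fin 2 → ℝ)
  | 0 => Measure.dirac 0
  | m + 1 => mconv (muN M D m) (uatom (M⁻¹ ^ (m + 1)) D)

section AtomicMeasure

variable {E : Type*} [MeasurableSpace E] {ι κ : Type*} [Fintype ι] [Fintype κ]

def atomicMeasure (x : ι → E) : Measure E :=
  (Fintype.card ι : ℝ≥0∞)⁻¹ • ∑ i, Measure.dirac (x i)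

theorem atomicMeasure_comp_equiv (e : κ ≃ ι) (x : ι → E) :
    atomicMeasure (x ∘ e) = atomicMeasure x := by
  simp only [atomicMeasure, Fintype.card_congr e, Function.comp_apply,
    e.sum_comp (fun i => Measure.dirac (x i))]

instance [Nonempty ι] (x : ι → E) : IsProbabilityMeasure (atomicMeasure x) := by
  constructor
  simp [atomicMeasure, ENNReal.inv_mul_cancel]

theorem sum_dirac_conv_sum_dirac [AddMonoid E] [MeasurableAdd₂ E] (x : ι → E) (y : κ → E) :
    (∑ i, Measure.dirac (x i)) ∗ (∑ j, Measure.dirac (y j)) =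
      ∑ p : ι × κ, Measure.dirac (x p.1 + y p.2) := by
  simp only [← Measure.sum_fintype, Measure.conv, Measure.prod_sum, Measure.dirac_prod_dirac]
  rw [Measure.map_sum (by fun_prop)]
  simp [Measure.map_dirac' measurable_add]

theorem atomicMeasure_conv [AddMonoid E] [MeasurableAdd₂ E] (x : ι → E) (y : κ → E) :
    atomicMeasure x ∗ atomicMeasure y = atomicMeasure fun p : ι × κ => x p.1 + y p.2 := by
  simp only [atomicMeasure, Measure.conv_smul_left, Measure.conv_smul_right,
    sum_dirac_conv_sum_dirac, smul_smul, Fintype.card_prod, Nat.cast_mul,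
    ENNReal.mul_inv (.inr (ENNReal.natCast_ne_top _)) (.inl (ENNReal.natCast_ne_top _))]
  rw [mul_comm]

variable [MeasurableSingletonClass E]

theorem ae_atomicMeasure_iff (x : ι → E) {p : E → Prop} :
    (∀ᵐ v ∂atomicMeasure x, p v) ↔ ∀ i, p (x i) := by
  simp [atomicMeasure, ← Measure.sum_fintype]

theorem integral_atomicMeasure {G : Type*} [NormedAddCommGroup G] [NormedSpace ℝ G]
    [CompleteSpace G] (x : ι → E) (f : E → G) :
    ∫ v, f v ∂atomicMeasure x = (Fintype.card ι : ℝ)⁻¹ • ∑ i, f (x i) := by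
  rw [atomicMeasure, integral_smul_measure,
    integral_finsetSum_measure fun i _ => integrable_dirac enorm_lt_top]
  simp [integral_dirac]

end AtomicMeasure

section AtomicLp

variable {E : Type*} [MeasurableSpace E] [MeasurableSingletonClass E] {ι : Type*} [Fintype ι]
  {p : ℝ≥0∞}

def evalAtoms (x : ι → E) : Lp ℂ p (atomicMeasure x) →ₗ[ℂ] ι → ℂ where
  toFun f i := f (x i)
  map_add' f g := funext <| (ae_atomicMeasure_iff x).1 (Lp.coeFn_add f g)
  map_smul' c f := funext <| (ae_atomicMeasure_iff x).1 (Lp.coeFn_smul c f)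

theorem evalAtoms_injective (x : ι → E) : Function.Injective (evalAtoms (p := p) x) :=
  fun _ _ hfg => Lp.ext <| (ae_atomicMeasure_iff x).2 (congrFun hfg)

instance (x : ι → E) : FiniteDimensional ℂ (Lp ℂ p (atomicMeasure x)) :=
  .of_injective _ (evalAtoms_injective x)

theorem finrank_Lp_atomicMeasure_le (x : ι → E) :
    Module.finrank ℂ (Lp ℂ p (atomicMeasure x)) ≤ Fintype.card ι :=
  (LinearMap.finrank_le_finrank_of_injective (evalAtoms_injective x)).trans_eq
    (Module.finrank_fintype_fun_eq_card ℂ)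

end AtomicLp

section Exponentials

def expTwoPiI (r : ℝ) : ℂ := exp (2 * π * I * r)

theorem expTwoPiI_zero : expTwoPiI 0 = 1 := by
  simp [expTwoPiI]

theorem expTwoPiI_intCast (k : ℤ) : expTwoPiI k = 1 := by
  rw [expTwoPiI, ofReal_intCast, mul_comm, exp_int_mul_two_pi_mul_I]

theorem expTwoPiI_natCast_mul (k : ℕ) (r : ℝ) : expTwoPiI (k * r) = expTwoPiI r ^ k := by
  rw [expTwoPiI, expTwoPiI, ← Complex.exp_nat_mul]
  push_cast
  ring_nf

theorem expTwoPiI_sum {α : Type*} (s : Finset α) (f : α → ℝ) :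
    expTwoPiI (∑ i ∈ s, f i) = ∏ i ∈ s, expTwoPiI (f i) := by
  simp only [expTwoPiI, ofReal_sum, Finset.mul_sum, Complex.exp_sum]

theorem norm_expTwoPiI (r : ℝ) : ‖expTwoPiI r‖ = 1 := by
  rw [expTwoPiI, show 2 * π * I * r = ((2 * π * r : ℝ) : ℂ) * I by push_cast; ring]
  exact norm_exp_ofReal_mul_I _

theorem expTwoPiI_mul_conj (r s : ℝ) :
    expTwoPiI s * starRingEnd ℂ (expTwoPiI r) = expTwoPiI (s - r) := by
  simp only [expTwoPiI, ← Complex.exp_conj, ← Complex.exp_add, map_mul, conj_ofReal, conj_I,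
    map_ofNat, ofReal_sub]
  ring_nf

theorem expTwoPiI_eq_one_iff {r : ℝ} : expTwoPiI r = 1 ↔ ∃ k : ℤ, r = k := by
  rw [expTwoPiI, Complex.exp_eq_one_iff]
  refine exists_congr fun k => ⟨fun h => ?_, fun h => by rw [h]; push_cast; ring⟩
  have : ((r : ℂ) - k) * (2 * π * I) = 0 := by linear_combination h
  simp only [mul_eq_zero, sub_eq_zero, OfNat.ofNat_ne_zero, ofReal_eq_zero, Real.pi_ne_zero,
    I_ne_zero, or_false] at this
  exact_mod_cast this

theorem sum_range_expTwoPiI_mul_div_eq_zero {q : ℕ} {t : ℤ} (ht : ¬ (q : ℤ) ∣ t) :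
    ∑ r ∈ Finset.range q, expTwoPiI (r * (t / q)) = 0 := by
  rcases q.eq_zero_or_pos with rfl | hq
  · simp
  have hq' : (q : ℝ) ≠ 0 := by positivity
  have hζ : expTwoPiI (t / q) ≠ 1 := by
    intro h
    obtain ⟨k, hk⟩ := expTwoPiI_eq_one_iff.1 h
    rw [div_eq_iff hq'] at hk
    exact ht ⟨k, by rw [mul_comm]; exact_mod_cast hk⟩
  simp only [expTwoPiI_natCast_mul]
  rw [geom_sum_eq hζ, ← expTwoPiI_natCast_mul, mul_div_cancel₀ _ hq', expTwoPiI_intCast,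
    sub_self, zero_div]

end Exponentials

section Spectrum

theorem dotR_eq_dotProduct (x y : Fin n → ℝ) : dotR x y = x ⬝ᵥ y := rfl

theorem expFun_apply (l x : Fin n → ℝ) : expFun l x = expTwoPiI (dotR l x) := rfl

theorem FT_eq_integral (μ : Measure (Fin n → ℝ)) (ξ : Fin n → ℝ) :
    FT μ ξ = ∫ x, expTwoPiI (dotR x ξ) ∂μ := rfl

variable (μ : Measure (Fin n → ℝ))

theorem memLp_expFun [IsFiniteMeasure μ] (l : Fin n → ℝ) (p : ℝ≥0∞) : MemLp (expFun l) p μ := by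
  have hcont : Continuous (expFun l) := by unfold expFun dotR; fun_prop
  exact .of_bound hcont.aestronglyMeasurable 1 (.of_forall fun x => (norm_expTwoPiI _).le)

theorem inner_toLp_expFun [IsFiniteMeasure μ] (l l' : Fin n → ℝ) :
    inner ℂ ((memLp_expFun μ l 2).toLp _) ((memLp_expFun μ l' 2).toLp _) = FT μ (l' - l) := by
  rw [L2.inner_def, FT_eq_integral]
  refine integral_congr_ae ?_
  filter_upwards [(memLp_expFun μ l 2).coeFn_toLp, (memLp_expFun μ l' 2).coeFn_toLp]
    with x hl hl'
  rw [hl, hl', RCLike.inner_apply, expFun_apply, expFun_apply, expTwoPiI_mul_conj]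
  simp only [dotR_eq_dotProduct, dotProduct_comm x, sub_dotProduct]

theorem FT_zero [IsProbabilityMeasure μ] : FT μ 0 = 1 := by
  simp [FT_eq_integral, dotR_eq_dotProduct, expTwoPiI_zero]

theorem orthonormal_toLp_expFun [IsProbabilityMeasure μ] {Λ : Set (Fin n → ℝ)}
    (hΛ : OrthExp μ Λ) :
    Orthonormal ℂ fun l : Λ =>
      (memLp_expFun μ (l : Fin n → ℝ) 2).toLp (expFun (l : Fin n → ℝ)) := by
  rw [orthonormal_iff_ite]
  intro l l'
  rw [inner_toLp_expFun]
  split_ifs with h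
  · rw [h, sub_self, FT_zero]
  · exact hΛ l' l'.2 l l.2 fun h' => h (Subtype.ext h'.symm)

theorem isSpectrum_of_orthExp [IsProbabilityMeasure μ] [FiniteDimensional ℂ (Lp ℂ 2 μ)]
    {Λ : Set (Fin n → ℝ)} [Fintype Λ] (hΛ : OrthExp μ Λ)
    (hcard : Module.finrank ℂ (Lp ℂ 2 μ) ≤ Fintype.card Λ) : IsSpectrum μ Λ := by
  have hon := orthonormal_toLp_expFun μ hΛ
  have hspan := hon.linearIndependent.span_eq_top_of_card_eq_finrank'
    (hon.linearIndependent.fintype_card_le_finrank.antisymm hcard)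
  refine ⟨(OrthonormalBasis.mk hon hspan.ge).toHilbertBasis, fun l => ?_⟩
  rw [OrthonormalBasis.coe_toHilbertBasis, OrthonormalBasis.coe_mk]
  exact (memLp_expFun μ l 2).coeFn_toLp

end Spectrum

section AtomicSpectrum

variable {ι κ : Type*} [Fintype ι] [Fintype κ]

theorem FT_atomicMeasure (x : ι → Fin n → ℝ) (ξ : Fin n → ℝ) :
    FT (atomicMeasure x) ξ = (Fintype.card ι : ℂ)⁻¹ * ∑ i, expTwoPiI (dotR (x i) ξ) := by
  rw [FT_eq_integral, integral_atomicMeasure, Complex.real_smul, ofReal_inv, ofReal_natCast]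

theorem isSpectrum_atomicMeasure_range [Nonempty ι] {x : ι → Fin n → ℝ} {f : κ → Fin n → ℝ}
    (hcard : Fintype.card ι ≤ Fintype.card κ)
    (horth : ∀ k k', k ≠ k' → ∑ i, expTwoPiI (dotR (x i) (f k - f k')) = 0) :
    IsSpectrum (atomicMeasure x) (range f) := by
  classical
  have hFT : ∀ k k', k ≠ k' → FT (atomicMeasure x) (f k - f k') = 0 := fun k k' h => by
    rw [FT_atomicMeasure, horth k k' h, mul_zero]
  have hf : Function.Injective f := fun k k' h => by
    by_contra hne
    simpa [h, FT_zero] using hFT k k' hne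
  refine isSpectrum_of_orthExp _ ?_ ?_
  · rintro _ ⟨k, rfl⟩ _ ⟨k', rfl⟩ hne
    exact hFT k k' fun h => hne (congrArg f h)
  · rw [Set.card_range_of_injective hf]
    exact (finrank_Lp_atomicMeasure_le x).trans hcard

end AtomicSpectrum

section Expansion

variable {ι κ : Type*} (N : Matrix (Fin n) (Fin n) ℝ)

def expansion (d : ι → Fin n → ℝ) {m : ℕ} (ε : Fin m → ι) : Fin n → ℝ :=
  ∑ i, (N⁻¹ ^ (i.val + 1)) *ᵥ d (ε i)

def dualExpansion (c : κ → Fin n → ℝ) {m : ℕ} (σ : Fin m → κ) : Fin n → ℝ :=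
  ∑ i, (Nᵀ ^ (i.val + 1)) *ᵥ c (σ i)

theorem expansion_snoc (d : ι → Fin n → ℝ) {m : ℕ} (ε : Fin m → ι) (r : ι) :
    expansion N d (Fin.snoc ε r : Fin (m + 1) → ι) = expansion N d ε + (N⁻¹ ^ (m + 1)) *ᵥ d r := by
  simp [expansion, Fin.sum_univ_castSucc]

theorem setOf_eq_range_dualExpansion (c : κ → Fin n → ℝ) (m : ℕ) :
    {x | ∃ c' : Fin m → Fin n → ℝ, (∀ i, c' i ∈ range c) ∧
      x = ∑ i : Fin m, (Nᵀ ^ (i.val + 1)) *ᵥ c' i} = range (dualExpansion N c (m := m)) := by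
  ext x
  constructor
  · rintro ⟨c', hc', rfl⟩
    choose σ hσ using hc'
    exact ⟨σ, by simp only [dualExpansion, hσ]⟩
  · rintro ⟨σ, rfl⟩
    exact ⟨c ∘ σ, fun i => mem_range_self _, rfl⟩

theorem mulVec_dotProduct_transpose_mulVec {R ν : Type*} [CommSemiring R] [Fintype ν]
    (A B : Matrix ν ν R) (u v : ν → R) :
    (A *ᵥ u) ⬝ᵥ (Bᵀ *ᵥ v) = ((B * A) *ᵥ u) ⬝ᵥ v := by
  rw [dotProduct_comm, mulVec_transpose, ← dotProduct_mulVec, dotProduct_comm, mulVec_mulVec]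

theorem dotR_expansion_dualExpansion_sub (d : ι → Fin n → ℝ) (c : κ → Fin n → ℝ) {m : ℕ}
    (ε : Fin m → ι) (σ σ' : Fin m → κ) :
    dotR (expansion N d ε) (dualExpansion N c σ - dualExpansion N c σ') =
      ∑ i, ∑ j, dotR ((N ^ (j.val + 1) * N⁻¹ ^ (i.val + 1)) *ᵥ d (ε i)) (c (σ j) - c (σ' j)) := by
  simp only [dotR_eq_dotProduct, expansion, dualExpansion, ← Finset.sum_sub_distrib,
    ← mulVec_sub, sum_dotProduct, dotProduct_sum, ← transpose_pow,
    mulVec_dotProduct_transpose_mulVec]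
  exact Finset.sum_comm

theorem sum_expTwoPiI_dotR_expansion_eq_zero [Fintype ι] (hN : IsUnit N.det) {d : ι → Fin n → ℝ}
    {c : κ → Fin n → ℝ}
    (hrow : ∀ s s', s ≠ s' → ∑ r, expTwoPiI (dotR (d r) (c s - c s')) = 0)
    (hint : ∀ k, 0 < k → ∀ r s s', ∃ z : ℤ, dotR ((N ^ k) *ᵥ d r) (c s - c s') = z)
    {m : ℕ} {σ σ' : Fin m → κ} (hσ : σ ≠ σ') :
    ∑ ε : Fin m → ι,
      expTwoPiI (dotR (expansion N d ε) (dualExpansion N c σ - dualExpansion N c σ')) = 0 := by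
  obtain ⟨i₀, hi₀, hmin⟩ : ∃ i₀, σ i₀ ≠ σ' i₀ ∧ ∀ j < i₀, σ j = σ' j := by
    obtain ⟨i₀, hi₀, hmin⟩ := wellFounded_lt.has_min {j | σ j ≠ σ' j} (Function.ne_iff.1 hσ)
    exact ⟨i₀, hi₀, fun j hj => not_not.1 fun h => hmin j h hj⟩
  set g : Fin m → ι → ℂ := fun i r => ∏ j, expTwoPiI
    (dotR ((N ^ (j.val + 1) * N⁻¹ ^ (i.val + 1)) *ᵥ d r) (c (σ j) - c (σ' j)))
  have hg (ε : Fin m → ι) : expTwoPiI (dotR (expansion N d ε)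
      (dualExpansion N c σ - dualExpansion N c σ')) = ∏ i, g i (ε i) := by
    simp only [dotR_expansion_dualExpansion_sub, expTwoPiI_sum, g]
  rw [Finset.sum_congr rfl fun ε _ => hg ε, ← Fintype.prod_sum]
  refine Finset.prod_eq_zero (Finset.mem_univ i₀) ?_
  -- In the factor of `i₀`, positions `j < i₀` contribute `0` since `σ j = σ' j`, and positions
  -- `j > i₀` contribute integers by `hint`; only the row sum of `hrow` remains.
  rw [← hrow _ _ hi₀]
  refine Finset.sum_congr rfl fun r _ => Finset.prod_eq_single i₀ (fun j _ hj => ?_) (by simp)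
    |>.trans ?_
  · rcases hj.lt_or_gt with hj | hj
    · rw [hmin j hj, sub_self, dotR_eq_dotProduct, dotProduct_zero, expTwoPiI_zero]
    · rw [inv_pow', ← pow_sub' N hN (by omega)]
      obtain ⟨z, hz⟩ := hint (j.val + 1 - (i₀.val + 1)) (by omega) r (σ j) (σ' j)
      rw [hz, expTwoPiI_intCast]
  · rw [inv_pow', mul_nonsing_inv _ (by rw [det_pow]; exact hN.pow _), one_mulVec]

end Expansion

section ConvolutionProduct

theorem uatom_eq_atomicMeasure (N : Matrix (Fin 2) (Fin 2) ℝ) (D : Finset (Fin 2 → ℤ)) :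
    uatom N D = atomicMeasure fun x : D => N *ᵥ vecR (x : Fin 2 → ℤ) := by
  rw [uatom, atomicMeasure, Fintype.card_coe,
    Finset.sum_coe_sort D fun d => Measure.dirac (N *ᵥ vecR d)]

theorem muN_eq_atomicMeasure (N : Matrix (Fin 2) (Fin 2) ℝ) (D : Finset (Fin 2 → ℤ)) (m : ℕ) :
    muN N D m = atomicMeasure (expansion N (fun x : D => vecR (x : Fin 2 → ℤ)) (m := m)) := by
  induction m with
  | zero => simp [muN, atomicMeasure, expansion]
  | succ m ih =>
    let e := (Equiv.prodComm _ _).trans (Fin.snocEquiv fun _ : Fin (m + 1) => D)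
    rw [muN, ih, uatom_eq_atomicMeasure]
    change atomicMeasure _ ∗ atomicMeasure _ = _
    rw [atomicMeasure_conv, ← atomicMeasure_comp_equiv e]
    congr 1
    funext p
    exact (expansion_snoc N _ p.1 p.2).symm

end ConvolutionProduct

section Example

theorem toR_pow_mulVec_vecR (M : Matrix (Fin n) (Fin n) ℤ) (k : ℕ) (x : Fin n → ℤ) :
    (toR M ^ k) *ᵥ vecR x = vecR ((M ^ k) *ᵥ x) := by
  ext i
  rw [vecR, ← eq_intCast (Int.castRingHom ℝ), RingHom.map_mulVec, ← RingHom.mapMatrix_apply,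
    map_pow]
  rfl

theorem dvd_mulVec_apply {R ν : Type*} [CommSemiring R] [Fintype ν] (A : Matrix ν ν R)
    {q : R} {v : ν → R} (hv : ∀ i, q ∣ v i) (i : ν) : q ∣ (A *ᵥ v) i :=
  Finset.dvd_sum fun j _ => dvd_mul_of_dvd_right (hv j) _

def cDigit (s : Fin 3) : Fin 2 → ℝ := ![(s : ℕ) / 3, 0]

theorem range_cDigit : range cDigit = {![0, 0], ![1 / 3, 0], ![2 / 3, 0]} := by
  ext v
  simp [cDigit, Fin.exists_fin_succ, eq_comm, one_add_one_eq_two]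

theorem dotR_cDigit_sub (v : Fin 2 → ℝ) (s s' : Fin 3) :
    dotR v (cDigit s - cDigit s') = v 0 * ((((s : ℕ) : ℤ) - (s' : ℕ) : ℤ) / 3 : ℝ) := by
  simp only [dotR, cDigit, Fin.sum_univ_two, Pi.sub_apply, cons_val_zero, cons_val_one,
    sub_self, mul_zero, add_zero]
  push_cast
  ring

theorem sum_expTwoPiI_dotR_cDigit_sub {s s' : Fin 3} (h : s ≠ s') :
    ∑ x ∈ ({![0, 0], ![1, 0], ![2, 9]} : Finset (Fin 2 → ℤ)),
      expTwoPiI (dotR (vecR x) (cDigit s - cDigit s')) = 0 := by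
  have h3 : ¬ ((3 : ℕ) : ℤ) ∣ ((s : ℕ) : ℤ) - (s' : ℕ) := by
    have := Fin.val_ne_of_ne h
    omega
  rw [← sum_range_expTwoPiI_mul_div_eq_zero h3, Finset.sum_insert (by decide),
    Finset.sum_insert (by decide), Finset.sum_singleton]
  simp [Finset.sum_range_succ, dotR_cDigit_sub, vecR, add_assoc]

variable {a b : ℤ}

theorem isUnit_det_toR (ha : a ≠ 0) : IsUnit (toR !![0, 3 * b + 1; 3 * a, 0]).det := by
  change IsUnit ((Int.castRingHom ℝ).mapMatrix _).det
  rw [isUnit_iff_ne_zero, ← RingHom.map_det, det_fin_two_of, eq_intCast, Int.cast_ne_zero]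
  have : 3 * b + 1 ≠ 0 := by omega
  simp [ha, this]

theorem three_dvd_pow_mulVec {x : Fin 2 → ℤ} (hx : x ∈ ({![0, 0], ![1, 0], ![2, 9]} : Finset _))
    {k : ℕ} (hk : 0 < k) (i : Fin 2) : 3 ∣ ((!![0, 3 * b + 1; 3 * a, 0] ^ k) *ᵥ x) i := by
  obtain ⟨k, rfl⟩ := Nat.exists_eq_add_of_lt hk
  rw [zero_add, pow_succ, ← mulVec_mulVec]
  refine dvd_mulVec_apply _ (fun j => ?_) i
  simp only [Finset.mem_insert, Finset.mem_singleton] at hx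
  rcases hx with rfl | rfl | rfl <;> fin_cases j <;> simp [mulVec, dotProduct] <;> omega

theorem exists_int_dotR_toR_pow_mulVec {x : Fin 2 → ℤ}
    (hx : x ∈ ({![0, 0], ![1, 0], ![2, 9]} : Finset _)) {k : ℕ} (hk : 0 < k) (s s' : Fin 3) :
    ∃ z : ℤ, dotR ((toR !![0, 3 * b + 1; 3 * a, 0] ^ k) *ᵥ vecR x) (cDigit s - cDigit s') = z := by
  obtain ⟨w, hw⟩ := three_dvd_pow_mulVec (a := a) (b := b) hx hk 0
  refine ⟨w * (((s : ℕ) : ℤ) - (s' : ℕ)), ?_⟩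
  rw [toR_pow_mulVec_vecR, dotR_cDigit_sub, vecR, hw]
  push_cast
  ring

end Example

theorem example_finite_spectrum_general (a b : ℤ) (ha : 3 ≤ a)
    (M : Matrix (Fin 2) (Fin 2) ℤ) (hMeq : M = !![0, 3 * b + 1; 3 * a, 0])
    (D : Finset (Fin 2 → ℤ)) (hD : D = {![0, 0], ![1, 0], ![2, 9]})
    (C : Set (Fin 2 → ℝ))
    (hC : C = {![0, 0], ![1 / 3, 0], ![2 / 3, 0]})
    (m : ℕ) (Λm : Set (Fin 2 → ℝ))
    (hΛm : Λm = {x | ∃ c : Fin m → (Fin 2 → ℝ), (∀ i, c i ∈ C) ∧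
        x = ∑ i : Fin m, ((toR M)ᵀ ^ (i.val + 1)).mulVec (c i)}) :
    IsSpectrum (muN (toR M) D m) Λm := by
  subst hMeq hD
  rw [muN_eq_atomicMeasure, hΛm, hC, ← range_cDigit, setOf_eq_range_dualExpansion]
  have : Nonempty (Fin m → ({![0, 0], ![1, 0], ![2, 9]} : Finset (Fin 2 → ℤ))) :=
    ⟨fun _ => ⟨![0, 0], by simp⟩⟩
  refine isSpectrum_atomicMeasure_range (by simp) fun σ σ' hσ =>
    sum_expTwoPiI_dotR_expansion_eq_zero _ (isUnit_det_toR (by omega))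
      (fun s s' h => (Finset.sum_coe_sort _ _).trans (sum_expTwoPiI_dotR_cDigit_sub h))
      (fun k hk x s s' => exists_int_dotR_toR_pow_mulVec x.2 hk s s') hσ

/-- `Λ_m` is a spectrum of `μ_m`. -/
theorem example_finite_spectrum (a b : ℤ) (ha : 3 ≤ a) (hb : 3 ≤ b)
    (M : Matrix (Fin 2) (Fin 2) ℤ) (hMeq : M = !![0, 3 * b + 1; 3 * a, 0])
    (D : Finset (Fin 2 → ℤ)) (hD : D = {![0, 0], ![1, 0], ![2, 9]})
    (C : Set (Fin 2 → ℝ))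
    (hC : C = {![0, 0], ![1 / 3, 0], ![2 / 3, 0]})
    (m : ℕ) (hm : 1 ≤ m) (Λm : Set (Fin 2 → ℝ))
    (hΛm : Λm = {x | ∃ c : Fin m → (Fin 2 → ℝ), (∀ i, c i ∈ C) ∧
        x = ∑ i : Fin m, ((toR M)ᵀ ^ (i.val + 1)).mulVec (c i)}) :
    IsSpectrum (muN (toR M) D m) Λm :=
  example_finite_spectrum_general a b ha M hMeq D hD C hC m Λm hΛm

end SA
end
end
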